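/- Let n ≥ 2 and let T be a tree on n vertices that is not isomorphic to the path P_n. Then H₂(T) < H₂(P_n); that is, among trees on n vertices the path is the unique tree attaining the maximum Rényi 2-entropy. -/

import Mathlib

open Matrix Real Finset

namespace VNE

variable {V : Type*} [Fintype V] [DecidableEq V]

/-- The density matrix `ρ(G) = L(G) / tr (L(G))` of a graph. -/
noncomputable def rho (G : SimpleGraph V) : Matrix V V ℝ :=
  letI := Classical.decRel G.Adj
  ((G.lapMatrix ℝ).trace)⁻¹ • G.lapMatrix ℝ

lemma rho_isHermitian (G : SimpleGraph V) : (rho G).IsHermitian := by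
  letI := Classical.decRel G.Adj
  have h : (G.lapMatrix ℝ).IsHermitian := (SimpleGraph.posSemidef_lapMatrix ℝ G).1
  unfold rho
  unfold Matrix.IsHermitian at h ⊢
  rw [Matrix.conjTranspose_smul, h, star_trivial]

/-- The eigenvalues of the density matrix of `G`. -/
noncomputable def eigs (G : SimpleGraph V) : V → ℝ :=
  (rho_isHermitian G).eigenvalues

/-- The von Neumann entropy of a graph. -/
noncomputable def vnEntropy (G : SimpleGraph V) : ℝ :=
  ∑ v, -(eigs G v * Real.logb 2 (eigs G v))

/-- The Rényi α-entropy of a graph. -/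
noncomputable def renyiEntropy (α : ℝ) (G : SimpleGraph V) : ℝ :=
  (1 / (1 - α)) * Real.logb 2 (∑ v, eigs G v ^ α)

/-- The Rényi 2-entropy of a graph, `−log₂ tr(ρ(G)²)`. -/
noncomputable def renyi2 (G : SimpleGraph V) : ℝ :=
  - Real.logb 2 ((rho G * rho G).trace)

/-- `tr₂(G) = tr(ρ(G)²)`. -/
noncomputable def tr2 (G : SimpleGraph V) : ℝ :=
  (rho G * rho G).trace

/-- The degree of a vertex, as a real number. -/
noncomputable def deg (G : SimpleGraph V) (v : V) : ℝ :=
  letI := Classical.decRel G.Adj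
  (G.degree v : ℝ)

/-- The degree sum `d_G` of a graph. -/
noncomputable def degSum (G : SimpleGraph V) : ℝ :=
  ∑ v, deg G v

/-- The star `K_{1,n-1}` on `n` vertices, with center the vertex `0`. -/
def starOn (n : ℕ) : SimpleGraph (Fin n) where
  Adj x y := x ≠ y ∧ (x.val = 0 ∨ y.val = 0)
  symm := ⟨fun _ _ h => ⟨h.1.symm, h.2.symm⟩⟩
  loopless := ⟨fun _ h => h.1 rfl⟩

section Traces

lemma trace_lap (G : SimpleGraph V) [DecidableRel G.Adj] :
    (G.lapMatrix ℝ).trace = ∑ v, (G.degree v : ℝ) := by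
  simp [SimpleGraph.lapMatrix, Matrix.trace_sub, SimpleGraph.degMatrix,
    Matrix.trace_diagonal]

lemma trace_lap_sq (G : SimpleGraph V) [DecidableRel G.Adj] :
    (G.lapMatrix ℝ * G.lapMatrix ℝ).trace
      = (∑ v, (G.degree v : ℝ) ^ 2) + ∑ v, (G.degree v : ℝ) := by
  have hDA : ((G.degMatrix ℝ) * (G.adjMatrix ℝ)).trace = 0 := by
    simp only [Matrix.trace, Matrix.diag, SimpleGraph.degMatrix,
      SimpleGraph.mul_adjMatrix_apply]
    refine Finset.sum_eq_zero fun x _ => Finset.sum_eq_zero fun u hu => ?_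
    rw [Matrix.diagonal_apply_ne _ (SimpleGraph.ne_of_adj G (by simpa using hu))]
  have hAD : ((G.adjMatrix ℝ) * (G.degMatrix ℝ)).trace = 0 := by
    simp only [Matrix.trace, Matrix.diag, SimpleGraph.degMatrix,
      SimpleGraph.adjMatrix_mul_apply]
    refine Finset.sum_eq_zero fun x _ => Finset.sum_eq_zero fun u hu => ?_
    rw [Matrix.diagonal_apply_ne _ (SimpleGraph.ne_of_adj G (by simpa using hu)).symm]
  have hDD : ((G.degMatrix ℝ) * (G.degMatrix ℝ)).trace = ∑ v, (G.degree v : ℝ) ^ 2 := by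
    simp [SimpleGraph.degMatrix, Matrix.diagonal_mul_diagonal, Matrix.trace_diagonal, sq]
  have hAA : ((G.adjMatrix ℝ) * (G.adjMatrix ℝ)).trace = ∑ v, (G.degree v : ℝ) := by
    simp only [Matrix.trace, Matrix.diag, SimpleGraph.adjMatrix_mul_self_apply_self]
  simp only [SimpleGraph.lapMatrix, Matrix.sub_mul, Matrix.mul_sub, Matrix.trace_sub]
  rw [hDA, hAD, hDD, hAA]
  ring

end Traces

section PathDegrees

lemma card_filter_val_eq (n c : ℕ) :
    ((Finset.univ : Finset (Fin n)).filter (fun w : Fin n => (w : ℕ) = c)).card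
      = if c < n then 1 else 0 := by
  split_ifs with h
  · rw [Finset.card_eq_one]
    refine ⟨⟨c, h⟩, ?_⟩
    ext w
    simp [Fin.ext_iff]
  · rw [Finset.card_eq_zero]
    ext w
    simp only [Finset.mem_filter, Finset.mem_univ, true_and, Finset.notMem_empty, iff_false]
    intro hw; exact h (hw ▸ w.isLt)

lemma pathGraph_degree (n : ℕ) [DecidableRel (SimpleGraph.pathGraph n).Adj] (v : Fin n) :
    (SimpleGraph.pathGraph n).degree v
      = (if (v : ℕ) + 1 < n then 1 else 0) + (if 0 < (v : ℕ) then 1 else 0) := by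
  have h := SimpleGraph.degree_eq_sum_if_adj (R := ℕ) (SimpleGraph.pathGraph n) v
  rw [Nat.cast_id] at h
  rw [h]
  have hsplit : ∀ w : Fin n, (if (SimpleGraph.pathGraph n).Adj v w then (1:ℕ) else 0)
      = (if (w : ℕ) = (v : ℕ) + 1 then 1 else 0) + (if ((w : ℕ)) + 1 = (v : ℕ) then 1 else 0) := by
    intro w
    by_cases h1 : (w : ℕ) = (v : ℕ) + 1 <;> by_cases h2 : (w : ℕ) + 1 = (v : ℕ) <;>
      simp [SimpleGraph.pathGraph_adj, h1, h2] <;> omega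
  rw [Finset.sum_congr rfl (fun w _ => hsplit w), Finset.sum_add_distrib]
  congr 1
  · rw [Finset.sum_boole, card_filter_val_eq, Nat.cast_id]
  · rcases Nat.eq_zero_or_pos (v : ℕ) with h0 | h0
    · rw [h0]
      simp only [Nat.lt_irrefl, if_false]
      refine Finset.sum_eq_zero fun w _ => ?_
      simp [h0]
    · obtain ⟨m, hm⟩ := Nat.exists_eq_succ_of_ne_zero (Nat.pos_iff_ne_zero.mp h0)
      have : ∀ w : Fin n, ((w : ℕ) + 1 = (v : ℕ)) = ((w : ℕ) = m) := by
        intro w; rw [hm]; simp only [eq_iff_iff]; omega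
      simp_rw [this]
      rw [Finset.sum_boole, card_filter_val_eq, Nat.cast_id, if_pos h0,
        if_pos (by have := v.isLt; omega)]

lemma pathGraph_degree_le (n : ℕ) [DecidableRel (SimpleGraph.pathGraph n).Adj] (v : Fin n) :
    (SimpleGraph.pathGraph n).degree v ≤ 2 := by
  rw [pathGraph_degree]; split_ifs <;> omega

lemma pathGraph_degree_pos (n : ℕ) (hn : 2 ≤ n) [DecidableRel (SimpleGraph.pathGraph n).Adj]
    (v : Fin n) : 1 ≤ (SimpleGraph.pathGraph n).degree v := by
  rw [pathGraph_degree]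
  have := v.isLt
  split_ifs <;> omega

lemma pathGraph_degSum (n : ℕ) [DecidableRel (SimpleGraph.pathGraph n).Adj] :
    ∑ v : Fin n, (SimpleGraph.pathGraph n).degree v = 2 * (n - 1) := by
  simp_rw [pathGraph_degree]
  rw [Finset.sum_add_distrib]
  have h1 : ∑ v : Fin n, (if (v : ℕ) + 1 < n then (1:ℕ) else 0) = n - 1 := by
    rw [Fin.sum_univ_eq_sum_range (fun i => if i + 1 < n then (1:ℕ) else 0), Finset.sum_boole,
      Nat.cast_id]
    have : (Finset.range n).filter (fun i => i + 1 < n) = Finset.range (n - 1) := by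
      ext i; simp only [Finset.mem_filter, Finset.mem_range]; omega
    rw [this, Finset.card_range]
  have h2 : ∑ v : Fin n, (if 0 < (v : ℕ) then (1:ℕ) else 0) = n - 1 := by
    rw [Fin.sum_univ_eq_sum_range (fun i => if 0 < i then (1:ℕ) else 0), Finset.sum_boole,
      Nat.cast_id]
    have : (Finset.range n).filter (fun i => 0 < i) = Finset.Ico 1 n := by
      ext i; simp only [Finset.mem_filter, Finset.mem_range, Finset.mem_Ico]; omega
    rw [this, Nat.card_Ico]
  rw [h1, h2]; omega

end PathDegrees

section Identity

lemma sum_sq_identity (D : V → ℕ) (h1 : ∀ v, 1 ≤ D v) :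
    (∑ v, (D v)^2) + 2 * Fintype.card V
      = (∑ v, (D v - 1) * (D v - 2)) + 3 * ∑ v, D v := by
  have key : ∀ v : V, (D v)^2 + 2 = (D v - 1)*(D v - 2) + 3 * D v := by
    intro v
    obtain ⟨k, hk⟩ := Nat.exists_eq_add_of_le (h1 v)
    rcases k with _ | l
    · rw [hk]; norm_num
    · have h2 : D v = l + 2 := by omega
      rw [h2, show l + 2 - 1 = l + 1 from rfl, show l + 2 - 2 = l from rfl]
      ring
  have hs : ∑ v, ((D v)^2 + 2) = ∑ v, ((D v - 1)*(D v - 2) + 3 * D v) :=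
    Finset.sum_congr rfl (fun v _ => key v)
  rw [Finset.sum_add_distrib, Finset.sum_add_distrib, Finset.sum_const, Finset.card_univ,
    smul_eq_mul, ← Finset.mul_sum] at hs
  omega

end Identity

section TreePath

lemma exists_pred {G : SimpleGraph V} (hc : G.Connected) {u v : V} {k : ℕ}
    (h : G.dist u v = k + 1) : ∃ p, G.Adj p v ∧ G.dist u p = k := by
  have hne : u ≠ v := by
    intro he; rw [he, SimpleGraph.dist_self] at h; omega
  obtain ⟨w, hw⟩ := hc.exists_walk_length_eq_dist u v
  obtain ⟨x, hadj, q, hq⟩ := SimpleGraph.Walk.exists_eq_cons_of_ne (Ne.symm hne) w.reverse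
  refine ⟨x, hadj.symm, ?_⟩
  have hlen : q.length = k := by
    have hl : w.reverse.length = k + 1 := by rw [SimpleGraph.Walk.length_reverse, hw, h]
    rw [hq, SimpleGraph.Walk.length_cons] at hl
    omega
  have h1 : G.dist u x ≤ k := by
    have := SimpleGraph.dist_le q.reverse
    rwa [SimpleGraph.Walk.length_reverse, hlen] at this
  have h2 : k ≤ G.dist u x := by
    have ht := hc.dist_triangle (u := u) (v := x) (w := v)
    have hx1 : G.dist x v ≤ 1 := by
      have := SimpleGraph.dist_le (SimpleGraph.Walk.cons hadj.symm SimpleGraph.Walk.nil)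
      simpa using this
    omega
  omega

lemma degree_pos {G : SimpleGraph V} [DecidableRel G.Adj] (hc : G.Connected)
    (hcard : 1 < Fintype.card V) (v : V) : 0 < G.degree v := by
  obtain ⟨w, hw⟩ := Fintype.exists_ne_of_one_lt_card hcard v
  have hr : G.dist w v ≠ 0 := by
    rw [SimpleGraph.dist_ne_zero_iff_ne_and_reachable]
    exact ⟨hw, hc.preconnected w v⟩
  obtain ⟨k, hk⟩ := Nat.exists_eq_succ_of_ne_zero hr
  obtain ⟨p, hp, -⟩ := exists_pred hc hk
  rw [SimpleGraph.degree_pos_iff_exists_adj]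
  exact ⟨p, hp.symm⟩

lemma dist_lt_card {G : SimpleGraph V} (hc : G.Connected) (u v : V) :
    G.dist u v < Fintype.card V := by
  obtain ⟨p, hp, hl⟩ := hc.exists_path_of_dist u v
  rw [← hl]
  exact hp.length_lt

lemma dist_injective {G : SimpleGraph V} [DecidableRel G.Adj] (hc : G.Connected)
    {u : V} (hu : G.degree u = 1) (hdeg : ∀ v, G.degree v ≤ 2) :
    Function.Injective (G.dist u) := by
  suffices H : ∀ k v w, G.dist u v = k → G.dist u w = k → v = w by
    intro v w h; exact H _ v w h rfl
  intro k
  induction k using Nat.strong_induction_on with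
  | _ k ih =>
    rcases k with _ | k
    · intro v w hv hw
      rw [hc.dist_eq_zero_iff] at hv hw
      rw [← hv, ← hw]
    · intro v w hv hw
      by_contra hne
      obtain ⟨pv, hpv, hdv⟩ := exists_pred hc hv
      obtain ⟨pw, hpw, hdw⟩ := exists_pred hc hw
      have hpe : pv = pw := ih k (Nat.lt_succ_self k) pv pw hdv hdw
      subst hpe
      rcases k with _ | m
      · -- pv = u, degree u = 1 but has two distinct neighbors
        have hpu : pv = u := by
          rw [hc.dist_eq_zero_iff] at hdv; exact hdv.symm
        subst hpu
        have hsub : ({v, w} : Finset V) ⊆ G.neighborFinset pv := by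
          intro x hx
          simp only [Finset.mem_insert, Finset.mem_singleton] at hx
          rcases hx with rfl | rfl
          · exact (SimpleGraph.mem_neighborFinset _ _ _).mpr hpv
          · exact (SimpleGraph.mem_neighborFinset _ _ _).mpr hpw
        have := Finset.card_le_card hsub
        rw [Finset.card_insert_of_notMem (by simpa using hne), Finset.card_singleton] at this
        rw [SimpleGraph.card_neighborFinset_eq_degree, hu] at this
        omega
      · -- pv at distance m+1 has a predecessor q; then q, v, w are three neighbors
        obtain ⟨q, hq, hdq⟩ := exists_pred hc hdv
        have hqv : q ≠ v := by
          intro he; rw [he, hv] at hdq; omega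
        have hqw : q ≠ w := by
          intro he; rw [he, hw] at hdq; omega
        have hsub : ({q, v, w} : Finset V) ⊆ G.neighborFinset pv := by
          intro x hx
          simp only [Finset.mem_insert, Finset.mem_singleton] at hx
          rcases hx with rfl | rfl | rfl
          · exact (SimpleGraph.mem_neighborFinset _ _ _).mpr hq.symm
          · exact (SimpleGraph.mem_neighborFinset _ _ _).mpr hpv
          · exact (SimpleGraph.mem_neighborFinset _ _ _).mpr hpw
        have hcard3 : ({q, v, w} : Finset V).card = 3 := by
          rw [Finset.card_insert_of_notMem (by simp [hqv, hqw]),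
            Finset.card_insert_of_notMem (by simpa using hne), Finset.card_singleton]
        have := Finset.card_le_card hsub
        rw [hcard3, SimpleGraph.card_neighborFinset_eq_degree] at this
        have := hdeg pv
        omega

lemma exists_leaf {G : SimpleGraph V} [DecidableRel G.Adj] (hT : G.IsTree)
    (hcard : 2 ≤ Fintype.card V) : ∃ u, G.degree u = 1 := by
  have hsum : ∑ v, G.degree v = 2 * (Fintype.card V - 1) := by
    rw [SimpleGraph.sum_degrees_eq_twice_card_edges]
    have := hT.card_edgeFinset
    omega
  by_contra hcon
  push_neg at hcon
  have hge : ∀ v : V, 2 ≤ G.degree v := by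
    intro v
    have h1 := degree_pos hT.isConnected (by omega) v
    have := hcon v
    omega
  have : ∑ v, (2:ℕ) ≤ ∑ v, G.degree v := Finset.sum_le_sum (fun v _ => hge v)
  rw [Finset.sum_const, Finset.card_univ, smul_eq_mul, hsum] at this
  omega

lemma iso_path_of_degree_le_two {n : ℕ} (hn : 2 ≤ n) {T : SimpleGraph (Fin n)}
    [DecidableRel T.Adj] (hT : T.IsTree) (hdeg : ∀ v, T.degree v ≤ 2) :
    Nonempty (T ≃g SimpleGraph.pathGraph n) := by
  have hc : T.Connected := hT.isConnected
  have hcard : Fintype.card (Fin n) = n := Fintype.card_fin n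
  obtain ⟨u, hu⟩ := exists_leaf hT (by omega)
  have hinj : Function.Injective (T.dist u) := dist_injective hc hu hdeg
  have hlt : ∀ v, T.dist u v < n := fun v => by
    have := dist_lt_card hc u v; omega
  let f : Fin n → Fin n := fun v => ⟨T.dist u v, hlt v⟩
  have hfinj : Function.Injective f := by
    intro v w h
    exact hinj (congrArg Fin.val h)
  have hfbij : Function.Bijective f := (Fintype.bijective_iff_injective_and_card f).mpr ⟨hfinj, rfl⟩
  -- adjacency correspondence
  have hadj : ∀ v w : Fin n, T.Adj v w ↔ (SimpleGraph.pathGraph n).Adj (f v) (f w) := by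
    intro v w
    rw [SimpleGraph.pathGraph_adj]
    constructor
    · intro hvw
      have h1 : T.dist v w = 1 := SimpleGraph.dist_eq_one_iff_adj.mpr hvw
      have t1 := hc.dist_triangle (u := u) (v := v) (w := w)
      have t2 := hc.dist_triangle (u := u) (v := w) (w := v)
      rw [h1] at t1
      rw [SimpleGraph.dist_comm (u := w) (v := v), h1] at t2
      have hne' : T.dist u v ≠ T.dist u w := fun he => hvw.ne (hinj he)
      show (f v).val + 1 = (f w).val ∨ (f w).val + 1 = (f v).val
      simp only [f]
      omega
    · intro h
      rcases h with h | h
      · -- dist u w = dist u v + 1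
        have hw' : T.dist u w = T.dist u v + 1 := by
          have : (f v).val + 1 = (f w).val := h
          simpa [f] using this.symm
        obtain ⟨p, hp, hdp⟩ := exists_pred hc hw'
        have : p = v := hinj (by rw [hdp])
        rwa [this] at hp
      · have hv' : T.dist u v = T.dist u w + 1 := by
          have : (f w).val + 1 = (f v).val := h
          simpa [f] using this.symm
        obtain ⟨p, hp, hdp⟩ := exists_pred hc hv'
        have : p = w := hinj (by rw [hdp])
        rw [this] at hp
        exact hp.symm
  exact ⟨⟨Equiv.ofBijective f hfbij, fun {v w} => (hadj v w).symm⟩⟩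

end TreePath

section Cast

lemma deg_le_two_of_sub (d : ℕ) (hd : d ≤ 2) : (d - 1) * (d - 2) = 0 := by
  interval_cases d <;> rfl

lemma tr2_eq (G : SimpleGraph V) :
    tr2 G = ((degSum G)⁻¹)^2 * ((∑ v, (deg G v)^2) + degSum G) := by
  letI := Classical.decRel G.Adj
  unfold tr2 rho degSum deg
  rw [Matrix.smul_mul, Matrix.mul_smul, Matrix.trace_smul, Matrix.trace_smul,
    trace_lap, trace_lap_sq]
  simp only [smul_eq_mul]
  ring

lemma deg_eq (G : SimpleGraph V) [DecidableRel G.Adj] (v : V) :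
    deg G v = (G.degree v : ℝ) := by
  unfold deg
  congr!

lemma degSum_eq (G : SimpleGraph V) [DecidableRel G.Adj] :
    degSum G = ((∑ v, G.degree v : ℕ) : ℝ) := by
  unfold degSum
  rw [Nat.cast_sum]
  exact Finset.sum_congr rfl fun v _ => deg_eq G v

lemma sumSq_eq (G : SimpleGraph V) [DecidableRel G.Adj] :
    ∑ v, (deg G v)^2 = ((∑ v, (G.degree v)^2 : ℕ) : ℝ) := by
  rw [Nat.cast_sum]
  refine Finset.sum_congr rfl fun v _ => ?_
  rw [deg_eq]
  push_cast
  rfl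

end Cast

theorem path_unique_max_renyi2_trees {n : ℕ} (hn : 2 ≤ n) (T : SimpleGraph (Fin n))
    (hT : T.IsTree) (hne : ¬ Nonempty (T ≃g SimpleGraph.pathGraph n)) :
    renyi2 T < renyi2 (SimpleGraph.pathGraph n) := by
  letI instT : DecidableRel T.Adj := Classical.decRel T.Adj
  letI instP : DecidableRel (SimpleGraph.pathGraph n).Adj :=
    Classical.decRel (SimpleGraph.pathGraph n).Adj
  set P := SimpleGraph.pathGraph n with hP
  have hcard : Fintype.card (Fin n) = n := Fintype.card_fin n
  -- natural number facts
  have hTdeg1 : ∀ v, 1 ≤ T.degree v := fun v =>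
    degree_pos hT.isConnected (by omega) v
  have hTsum : ∑ v, T.degree v = 2 * (n - 1) := by
    rw [SimpleGraph.sum_degrees_eq_twice_card_edges]
    have := hT.card_edgeFinset
    omega
  have hPsum : ∑ v, P.degree v = 2 * (n - 1) := pathGraph_degSum n
  have hPle : ∀ v, P.degree v ≤ 2 := pathGraph_degree_le n
  have hPpos : ∀ v, 1 ≤ P.degree v := pathGraph_degree_pos n hn
  have h3 : ∃ v, 3 ≤ T.degree v := by
    by_contra hcon
    push_neg at hcon
    exact hne (iso_path_of_degree_le_two hn hT (fun v => by have := hcon v; omega))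
  have hidT : (∑ v, (T.degree v)^2) + 2 * n
      = (∑ v, (T.degree v - 1) * (T.degree v - 2)) + 3 * (2 * (n - 1)) := by
    have h := sum_sq_identity (fun v => T.degree v) hTdeg1
    rw [hcard, hTsum] at h
    exact h
  have hidP : (∑ v, (P.degree v)^2) + 2 * n
      = (∑ v, (P.degree v - 1) * (P.degree v - 2)) + 3 * (2 * (n - 1)) := by
    have h := sum_sq_identity (fun v => P.degree v) hPpos
    rw [hcard, hPsum] at h
    exact h
  have hfP : ∑ v, (P.degree v - 1) * (P.degree v - 2) = 0 :=
    Finset.sum_eq_zero fun v _ => deg_le_two_of_sub _ (hPle v)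
  have hfT : 2 ≤ ∑ v, (T.degree v - 1) * (T.degree v - 2) := by
    obtain ⟨v, hv⟩ := h3
    calc (2:ℕ) = 2 * 1 := rfl
    _ ≤ (T.degree v - 1) * (T.degree v - 2) := Nat.mul_le_mul (by omega) (by omega)
    _ ≤ ∑ v, (T.degree v - 1) * (T.degree v - 2) :=
        Finset.single_le_sum (f := fun w => (T.degree w - 1) * (T.degree w - 2))
          (fun w _ => Nat.zero_le _) (Finset.mem_univ v)
  have hsum_lt : ∑ v, (P.degree v)^2 < ∑ v, (T.degree v)^2 := by
    rw [hfP] at hidP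
    omega
  -- pass to the reals
  have hdT : degSum T = ((2 * (n - 1) : ℕ) : ℝ) := by rw [degSum_eq, hTsum]
  have hdP : degSum P = ((2 * (n - 1) : ℕ) : ℝ) := by rw [degSum_eq, hPsum]
  have hsT : (∑ v, (deg T v)^2) = ((∑ v, (T.degree v)^2 : ℕ) : ℝ) := sumSq_eq T
  have hsP : (∑ v, (deg P v)^2) = ((∑ v, (P.degree v)^2 : ℕ) : ℝ) := sumSq_eq P
  have hdpos : (0:ℝ) < ((2 * (n - 1) : ℕ) : ℝ) := by
    have h2 : 0 < 2 * (n - 1) := by omega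
    exact_mod_cast h2
  have hcpos : (0:ℝ) < (((2 * (n - 1) : ℕ) : ℝ)⁻¹)^2 := by positivity
  have hlt : tr2 P < tr2 T := by
    rw [tr2_eq, tr2_eq, hdT, hdP, hsT, hsP]
    apply mul_lt_mul_of_pos_left _ hcpos
    refine add_lt_add_of_lt_of_le ?_ le_rfl
    exact_mod_cast hsum_lt
  have h0 : 0 < tr2 P := by
    rw [tr2_eq, hdP, hsP]
    apply mul_pos hcpos
    have hnn : (0:ℝ) ≤ ((∑ v, (P.degree v)^2 : ℕ) : ℝ) := Nat.cast_nonneg _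
    linarith
  have hr : ∀ G : SimpleGraph (Fin n), renyi2 G = - Real.logb 2 (tr2 G) := fun _ => rfl
  rw [hr, hr]
  exact neg_lt_neg (Real.logb_lt_logb one_lt_two h0 hlt)


end VNE
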